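/- arXiv:1602.05662 — 5 statements merged into one kernel-verified Lean document; each statement's English description precedes it below -/
import Mathlib

section
/- For every sequence of positive reals (a_n)_{n≥0} with ∑ a_n < ∞ and every α ∈ (0,1], there exists a strictly increasing sequence of natural numbers n_1 < n_2 < ... such that (∑_{i=0}^{n_1} a_i)^α ≥ ∑_{k=1}^∞ (∑_{j=n_k+1}^{n_{k+1}} a_j)^α. -/
/-- Lemma 1: for a summable sequence of positive reals and `α ∈ (0,1]`, there is a strictly
increasing sequence `n 0 < n 1 < ⋯` (playing the role of `n_1 < n_2 < ⋯`) with
`(∑_{i=0}^{n 0} a i)^α ≥ ∑_{k} (∑_{j=n k + 1}^{n (k+1)} a j)^α`. -/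
theorem exists_strictMono_blocks_rpow
    (a : ℕ → ℝ) (ha : ∀ n, 0 < a n) (hsum : Summable a)
    (α : ℝ) (hα0 : 0 < α) (hα1 : α ≤ 1) :
    ∃ n : ℕ → ℕ, StrictMono n ∧
      ∑' k : ℕ, (∑ j ∈ Finset.Ioc (n k) (n (k + 1)), a j) ^ α ≤
        (∑ i ∈ Finset.range (n 0 + 1), a i) ^ α := by
  set r : ℝ := (1/2 : ℝ) ^ α with hrdef
  have hr0 : 0 < r := Real.rpow_pos_of_pos (by norm_num) α
  have hr1 : r < 1 := Real.rpow_lt_one (by norm_num) (by norm_num) hα0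
  have h1r : 0 < 1 - r := by linarith
  set ε : ℝ := (1 - r) ^ (1/α) * a 0 with hεdef
  have hε0 : 0 < ε := mul_pos (Real.rpow_pos_of_pos h1r _) (ha 0)
  set t : ℕ → ℝ := fun N => ∑' i, a (i + N) with htdef
  have htail : Filter.Tendsto t Filter.atTop (nhds 0) := tendsto_sum_nat_add a
  have hchoice : ∀ k : ℕ, ∃ N, ∀ m ≥ N, t m ≤ ε * (1/2) ^ k := by
    intro k
    have hpos : (0:ℝ) < ε * (1/2) ^ k := mul_pos hε0 (by positivity)
    exact Filter.eventually_atTop.1 (htail.eventually (eventually_le_nhds hpos))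
  choose N hN using hchoice
  set n : ℕ → ℕ := fun k => Nat.rec (N 0) (fun k nk => max (nk + 1) (N (k+1))) k with hndef
  have hsucc : ∀ k, n (k+1) = max (n k + 1) (N (k+1)) := fun k => rfl
  have hmono : StrictMono n := by
    apply strictMono_nat_of_lt_succ
    intro k
    rw [hsucc k]
    exact lt_of_lt_of_le (Nat.lt_succ_self _) (le_max_left _ _)
  have hnN : ∀ k, N k ≤ n k := by
    intro k
    cases k with
    | zero => exact le_refl _
    | succ k => rw [hsucc k]; exact le_max_right _ _
  refine ⟨n, hmono, ?_⟩
  -- block sum bound by tail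
  have hblock : ∀ k, ∑ j ∈ Finset.Ioc (n k) (n (k+1)), a j ≤ ε * (1/2) ^ k := by
    intro k
    have h1 : ∑ j ∈ Finset.Ioc (n k) (n (k+1)), a j ≤ t (n k + 1) := by
      have heq : Finset.Ioc (n k) (n (k+1)) = Finset.Ico (n k + 1) (n (k+1) + 1) := by
        ext j; simp [Finset.mem_Ioc, Finset.mem_Ico]
      rw [heq, Finset.sum_Ico_eq_sum_range]
      have hs : Summable (fun i => a (i + (n k + 1))) := (summable_nat_add_iff (n k + 1)).2 hsum
      have := Summable.sum_le_tsum (Finset.range (n (k+1) + 1 - (n k + 1)))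
        (fun i _ => (ha (i + (n k + 1))).le) hs
      simpa [add_comm] using this
    exact h1.trans (hN k (n k + 1) (Nat.le_succ_of_le (hnN k)))
  have hblock_nonneg : ∀ k, (0:ℝ) ≤ ∑ j ∈ Finset.Ioc (n k) (n (k+1)), a j :=
    fun k => Finset.sum_nonneg (fun j _ => (ha j).le)
  -- pointwise rpow bound
  have hterm : ∀ k, (∑ j ∈ Finset.Ioc (n k) (n (k+1)), a j) ^ α ≤ ε ^ α * r ^ k := by
    intro k
    have h1 : (∑ j ∈ Finset.Ioc (n k) (n (k+1)), a j) ^ α ≤ (ε * (1/2) ^ k) ^ α :=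
      Real.rpow_le_rpow (hblock_nonneg k) (hblock k) hα0.le
    have h2 : (ε * (1/2 : ℝ) ^ k) ^ α = ε ^ α * r ^ k := by
      rw [Real.mul_rpow hε0.le (by positivity)]
      congr 1
      rw [hrdef, ← Real.rpow_natCast ((1/2:ℝ)) k, ← Real.rpow_mul (by norm_num),
        mul_comm, Real.rpow_mul (by norm_num), Real.rpow_natCast]
    rw [h2] at h1
    exact h1
  have hg : Summable (fun k : ℕ => ε ^ α * r ^ k) :=
    (summable_geometric_of_lt_one hr0.le hr1).mul_left _
  have hsb : Summable (fun k : ℕ => (∑ j ∈ Finset.Ioc (n k) (n (k+1)), a j) ^ α) :=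
    Summable.of_nonneg_of_le (fun k => Real.rpow_nonneg (hblock_nonneg k) α) hterm hg
  have hgsum : ∑' k : ℕ, ε ^ α * r ^ k = (a 0) ^ α := by
    rw [tsum_mul_left, tsum_geometric_of_lt_one hr0.le hr1]
    have hεα : ε ^ α = (1 - r) * (a 0) ^ α := by
      rw [hεdef, Real.mul_rpow (Real.rpow_nonneg h1r.le _) (ha 0).le,
        ← Real.rpow_mul h1r.le, one_div, inv_mul_cancel₀ hα0.ne', Real.rpow_one]
    rw [hεα]
    field_simp
  calc ∑' k : ℕ, (∑ j ∈ Finset.Ioc (n k) (n (k+1)), a j) ^ α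
      ≤ ∑' k : ℕ, ε ^ α * r ^ k := Summable.tsum_le_tsum hterm hsb hg
    _ = (a 0) ^ α := hgsum
    _ ≤ (∑ i ∈ Finset.range (n 0 + 1), a i) ^ α := by
        apply Real.rpow_le_rpow (ha 0).le _ hα0.le
        exact Finset.single_le_sum (fun i _ => (ha i).le) (Finset.mem_range.2 (Nat.succ_pos _))
end

section
/- Let q : ℕ → ℝ with q_i > 0 and ∑ q_i = 1. For every infinite sequence (α_n)_{n≥1} of natural numbers, the intersection ⋂_{n≥1} Δ_{α_1...α_n} of the nested Q_∞-cylinders consists of exactly one point of [0,1). -/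
/-- The length of the `Q_∞`-cylinder with digits `w 0, …, w (n-1)`. -/
noncomputable def cylLen (q : ℕ → ℝ) (w : ℕ → ℕ) (n : ℕ) : ℝ :=
  ∏ i ∈ Finset.range n, q (w i)

/-- The left endpoint of the `Q_∞`-cylinder with digits `w 0, …, w (n-1)`. -/
noncomputable def cylLeft (q : ℕ → ℝ) (w : ℕ → ℕ) (n : ℕ) : ℝ :=
  ∑ k ∈ Finset.range n, (∑ j ∈ Finset.range (w k), q j) * ∏ i ∈ Finset.range k, q (w i)

/-- The `Q_∞`-cylinder `Δ_{w 0 … w (n-1)}` as a half-open interval. -/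
noncomputable def cyl (q : ℕ → ℝ) (w : ℕ → ℕ) (n : ℕ) : Set ℝ :=
  Set.Ico (cylLeft q w n) (cylLeft q w n + cylLen q w n)

/-- The intersection of the nested cylinders along an infinite digit sequence is a single
point of `[0,1)`. -/
theorem iInter_cyl_eq_singleton (q : ℕ → ℝ) (hq : ∀ i, 0 < q i) (hsum : HasSum q 1)
    (w : ℕ → ℕ) :
    ∃ x : ℝ, x ∈ Set.Ico (0 : ℝ) 1 ∧ (⋂ n : ℕ, cyl q w (n + 1)) = {x} := by
  set L := cylLeft q w with hLdef
  set len := cylLen q w with hlendef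
  have hlenpos : ∀ n, 0 < len n := fun n => Finset.prod_pos fun i _ => hq (w i)
  have hS1 : ∀ k, ∑ i ∈ Finset.range k, q i ≤ 1 := fun k =>
    sum_le_hasSum _ (fun i _ => (hq i).le) hsum
  have hSlt : ∀ k, ∑ i ∈ Finset.range k, q i < 1 := fun k => by
    have h := hS1 (k + 1)
    rw [Finset.sum_range_succ] at h
    linarith [hq k]
  have hSnn : ∀ k, 0 ≤ ∑ i ∈ Finset.range k, q i := fun k =>
    Finset.sum_nonneg fun i _ => (hq i).le
  have hLsucc : ∀ n, L (n + 1) = L n + (∑ j ∈ Finset.range (w n), q j) * len n := fun n =>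
    Finset.sum_range_succ _ n
  have hlensucc : ∀ n, len (n + 1) = len n * q (w n) := fun n =>
    Finset.prod_range_succ _ n
  set R := fun n => L n + len n with hRdef
  have hRsucc : ∀ n, R (n + 1) = L n + (∑ j ∈ Finset.range (w n + 1), q j) * len n := by
    intro n
    simp only [hRdef]
    rw [hLsucc, hlensucc, Finset.sum_range_succ]
    ring
  have hRanti : StrictAnti R := strictAnti_nat_of_succ_lt fun n => by
    rw [hRsucc]
    have h1 := hSlt (w n + 1)
    have h2 := hlenpos n
    simp only [hRdef]
    nlinarith
  have hLmono : Monotone L := monotone_nat_of_le_succ fun n => by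
    rw [hLsucc]
    nlinarith [hSnn (w n), (hlenpos n).le]
  have hLltR : ∀ n, L n < R n := fun n => lt_add_of_pos_right _ (hlenpos n)
  have hLR : ∀ m n, L m ≤ R n := by
    intro m n
    rcases le_total m n with h | h
    · exact (hLmono h).trans (hLltR n).le
    · exact (hLltR m).le.trans (hRanti.antitone h)
  have hbdd : BddAbove (Set.range L) := ⟨R 0, by rintro _ ⟨m, rfl⟩; exact hLR m 0⟩
  set x := ⨆ n, L n with hxdef
  have hxge : ∀ n, L n ≤ x := fun n => le_ciSup hbdd n
  have hxle : ∀ n, x ≤ R n := fun n => ciSup_le fun m => hLR m n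
  have hxlt : ∀ n, x < R n := fun n => lt_of_le_of_lt (hxle (n + 1)) (hRanti (Nat.lt_succ_self n))
  -- len tends to 0
  set c : ℝ := 1 - min (q 0) (q 1) with hcdef
  have hq01 : q 0 + q 1 ≤ 1 := by
    have := sum_le_hasSum ({0, 1} : Finset ℕ) (fun i _ => (hq i).le) hsum
    simpa using this
  have hc1 : c < 1 := by
    have := lt_min (hq 0) (hq 1)
    simp only [hcdef]
    linarith
  have hc0 : 0 ≤ c := by
    have h0 : min (q 0) (q 1) ≤ q 0 := min_le_left _ _
    simp only [hcdef]
    linarith [hq 1]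
  have hqc : ∀ k, q k ≤ c := by
    intro k
    rcases eq_or_ne k 0 with rfl | hk
    · have : min (q 0) (q 1) ≤ q 1 := min_le_right _ _
      simp only [hcdef]; linarith
    · have hpair : q 0 + q k ≤ 1 := by
        have := sum_le_hasSum ({0, k} : Finset ℕ) (fun i _ => (hq i).le) hsum
        rwa [Finset.sum_pair (Ne.symm hk)] at this
      have : min (q 0) (q 1) ≤ q 0 := min_le_left _ _
      simp only [hcdef]; linarith
  have hlenle : ∀ n, len n ≤ c ^ n := by
    intro n
    induction n with
    | zero => simp [hlendef, cylLen]
    | succ n ih =>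
      rw [hlensucc, pow_succ]
      exact mul_le_mul ih (hqc (w n)) (hq (w n)).le (by positivity)
  have hlen0 : Filter.Tendsto len Filter.atTop (nhds 0) := by
    apply squeeze_zero (fun n => (hlenpos n).le) hlenle
    exact tendsto_pow_atTop_nhds_zero_of_lt_one hc0 hc1
  refine ⟨x, ⟨?_, ?_⟩, ?_⟩
  · have h0 : (0 : ℝ) ≤ L 1 := by
      have : L 1 = (∑ j ∈ Finset.range (w 0), q j) * len 0 := by
        rw [hLsucc]
        simp [hLdef, cylLeft]
      rw [this]
      exact mul_nonneg (hSnn _) (hlenpos 0).le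
    exact h0.trans (hxge 1)
  · have hR1 : R 1 ≤ 1 := by
      have : R 1 = (∑ j ∈ Finset.range (w 0 + 1), q j) * len 0 + L 0 := by
        rw [hRsucc]; ring
      rw [this]
      have hL0 : L 0 = 0 := by simp [hLdef, cylLeft]
      have hlen0' : len 0 = 1 := by simp [hlendef, cylLen]
      rw [hL0, hlen0']
      simpa using hS1 (w 0 + 1)
    exact lt_of_lt_of_le (hxlt 1) hR1
  · ext y
    simp only [Set.mem_iInter, cyl, Set.mem_Ico, Set.mem_singleton_iff]
    constructor
    · intro hy
      have hyx : x ≤ y := by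
        apply ciSup_le
        intro n
        cases n with
        | zero => have := (hy 0).1; have hL0 : L 0 = 0 := by simp [hLdef, cylLeft]
                  rw [hL0]
                  have h1 : L 1 ≤ y := (hy 0).1
                  have : (0:ℝ) ≤ L 1 := by
                    have e : L 1 = (∑ j ∈ Finset.range (w 0), q j) * len 0 := by
                      rw [hLsucc]; simp [hLdef, cylLeft]
                    rw [e]; exact mul_nonneg (hSnn _) (hlenpos 0).le
                  linarith
        | succ n => exact (hy n).1
      have hyx' : y ≤ x := by
        have key : ∀ n : ℕ, y ≤ x + len (n + 1) := by
          intro n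
          have h1 : y < L (n + 1) + len (n + 1) := (hy n).2
          have h2 : L (n + 1) ≤ x := hxge (n + 1)
          linarith
        have htend : Filter.Tendsto (fun n => x + len (n + 1)) Filter.atTop (nhds x) := by
          have : Filter.Tendsto (fun n => len (n + 1)) Filter.atTop (nhds 0) :=
            hlen0.comp (Filter.tendsto_add_atTop_nat 1)
          simpa using tendsto_const_nhds.add this
        exact ge_of_tendsto htend (Filter.Eventually.of_forall key)
      linarith
    · rintro rfl
      intro n
      exact ⟨hxge (n + 1), hxlt (n + 1)⟩
end

section
/- Let q : ℕ → ℝ with q_i > 0 and ∑ q_i = 1, and suppose there exist m_0 > 1, A > 0, B > 0 with A/i^{m_0} ≤ q_i ≤ B/i^{m_0} for all i ≥ 1. Then there exist α ∈ (0,1) and δ ∈ (0,α) such that for every N there exist n, M > N with (∑_{i=n}^{n+M} q_i)^{α-δ} < ∑_{i=n}^{n+M} q_i^α. -/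
/-- Under polynomial decay `q_i ≍ i^{-m₀}` (`m₀ > 1`) the faithfulness inequality fails:
there are `α ∈ (0,1)` and `δ ∈ (0,α)` such that for every `N` there are `n, M > N` with
`(∑_{i=n}^{n+M} q_i)^{α-δ} < ∑_{i=n}^{n+M} q_i^α`. -/
theorem polynomial_decay_nonfaithful (q : ℕ → ℝ) (hq : ∀ i, 0 < q i) (hsum : HasSum q 1)
    (m₀ A B : ℝ) (hm₀ : 1 < m₀) (hA : 0 < A) (hB : 0 < B)
    (hbound : ∀ i : ℕ, 1 ≤ i → A / (i : ℝ) ^ m₀ ≤ q i ∧ q i ≤ B / (i : ℝ) ^ m₀) :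
    ∃ α ∈ Set.Ioo (0 : ℝ) 1, ∃ δ ∈ Set.Ioo (0 : ℝ) α, ∀ N : ℕ, ∃ n M : ℕ,
      N < n ∧ N < M ∧
        (∑ i ∈ Finset.Icc n (n + M), q i) ^ (α - δ) <
          ∑ i ∈ Finset.Icc n (n + M), q i ^ α := by
  have hm0pos : (0:ℝ) < m₀ := lt_trans one_pos hm₀
  set α : ℝ := 1 / (2 * m₀) with hα
  have hαpos : 0 < α := by positivity
  have hα1 : α < 1 := by
    rw [hα, div_lt_one (by linarith)]
    linarith
  have hexp : m₀ * α = 1 / 2 := by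
    rw [hα]; field_simp
  refine ⟨α, ⟨hαpos, hα1⟩, α/2, ⟨by positivity, by linarith⟩, ?_⟩
  intro N
  set c : ℝ := A ^ α with hc
  have hcpos : 0 < c := Real.rpow_pos_of_pos hA α
  set n := N + 1 with hn
  obtain ⟨K, hK⟩ := exists_nat_ge (3 / c ^ 2)
  set M := max n K with hM
  have hMn : n ≤ M := le_max_left _ _
  refine ⟨n, M, Nat.lt_succ_self N, lt_of_lt_of_le (Nat.lt_succ_self N) hMn, ?_⟩
  -- LHS ≤ 1
  have hS0 : 0 ≤ ∑ i ∈ Finset.Icc n (n + M), q i :=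
    Finset.sum_nonneg fun i _ => (hq i).le
  have hS1 : ∑ i ∈ Finset.Icc n (n + M), q i ≤ 1 :=
    sum_le_hasSum _ (fun i _ => (hq i).le) hsum
  have hLHS : (∑ i ∈ Finset.Icc n (n + M), q i) ^ (α - α/2) ≤ 1 :=
    Real.rpow_le_one hS0 hS1 (by linarith)
  -- termwise lower bound
  set T : ℝ := ((n + M : ℕ) : ℝ) with hT
  have hT1 : (1:ℝ) ≤ T := by
    rw [hT]; exact_mod_cast Nat.one_le_iff_ne_zero.mpr (by omega)
  have hTpos : 0 < T ^ ((1:ℝ)/2) := Real.rpow_pos_of_pos (by linarith) _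
  have hterm : ∀ i ∈ Finset.Icc n (n + M), c / T ^ ((1:ℝ)/2) ≤ q i ^ α := by
    intro i hi
    rw [Finset.mem_Icc] at hi
    have hi1 : 1 ≤ i := by omega
    have hipos : (0:ℝ) < (i:ℝ) := by exact_mod_cast Nat.lt_of_lt_of_le Nat.zero_lt_one hi1
    have h1 : (A / (i:ℝ) ^ m₀) ^ α ≤ q i ^ α :=
      Real.rpow_le_rpow (by positivity) (hbound i hi1).1 hαpos.le
    have h2 : (A / (i:ℝ) ^ m₀) ^ α = c / (i:ℝ) ^ ((1:ℝ)/2) := by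
      rw [Real.div_rpow hA.le (Real.rpow_nonneg hipos.le _), hc,
        ← Real.rpow_mul hipos.le, hexp]
    have h3 : c / T ^ ((1:ℝ)/2) ≤ c / (i:ℝ) ^ ((1:ℝ)/2) := by
      have hiT : (i:ℝ) ≤ T := by rw [hT]; exact_mod_cast hi.2
      have := Real.rpow_le_rpow hipos.le hiT (by norm_num : (0:ℝ) ≤ 1/2)
      gcongr
    calc c / T ^ ((1:ℝ)/2) ≤ c / (i:ℝ) ^ ((1:ℝ)/2) := h3
    _ = (A / (i:ℝ) ^ m₀) ^ α := h2.symm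
    _ ≤ q i ^ α := h1
  have hcard : (Finset.Icc n (n + M)).card = M + 1 := by
    rw [Nat.card_Icc]; omega
  have hsumlb : ((M:ℝ) + 1) * (c / T ^ ((1:ℝ)/2)) ≤ ∑ i ∈ Finset.Icc n (n + M), q i ^ α := by
    have := Finset.card_nsmul_le_sum (Finset.Icc n (n + M)) (fun i => q i ^ α)
      (c / T ^ ((1:ℝ)/2)) hterm
    rwa [hcard, nsmul_eq_mul, Nat.cast_add, Nat.cast_one] at this
  -- RHS > 1
  have hMc : (3:ℝ) ≤ (M:ℝ) * c ^ 2 := by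
    have hKM : (K:ℝ) ≤ (M:ℝ) := by exact_mod_cast le_max_right n K
    have h3c : (3:ℝ) ≤ K * c ^ 2 := by
      have := mul_le_mul_of_nonneg_right hK (sq_nonneg c)
      rwa [div_mul_cancel₀ _ (by positivity : c ^ 2 ≠ 0)] at this
    nlinarith [sq_nonneg c]
  have hM1 : (1:ℝ) ≤ (M:ℝ) := by exact_mod_cast Nat.one_le_iff_ne_zero.mpr (by omega)
  have hn1 : (n:ℝ) ≤ (M:ℝ) := by exact_mod_cast hMn
  have hn1' : (1:ℝ) ≤ (n:ℝ) := by exact_mod_cast Nat.one_le_iff_ne_zero.mpr (by omega)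
  have hkey : T < (((M:ℝ) + 1) * c) ^ 2 := by
    have hTval : T = (n:ℝ) + (M:ℝ) := by rw [hT]; push_cast; ring
    rw [hTval]
    nlinarith [mul_le_mul_of_nonneg_left hMc (by positivity : (0:ℝ) ≤ (M:ℝ)), sq_nonneg c]
  have hRHS : 1 < ((M:ℝ) + 1) * (c / T ^ ((1:ℝ)/2)) := by
    rw [← Real.sqrt_eq_rpow]
    rw [mul_div_assoc', lt_div_iff₀ (Real.sqrt_pos.mpr (by linarith)), one_mul]
    have := (Real.sqrt_lt' (by positivity : (0:ℝ) < ((M:ℝ) + 1) * c)).mpr hkey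
    linarith
  calc (∑ i ∈ Finset.Icc n (n + M), q i) ^ (α - α/2) ≤ 1 := hLHS
  _ < ((M:ℝ) + 1) * (c / T ^ ((1:ℝ)/2)) := hRHS
  _ ≤ ∑ i ∈ Finset.Icc n (n + M), q i ^ α := hsumlb
end

section
/- Let q_i = 1/((i+1)(i+2)) for i ∈ ℕ. Then there exist α ∈ (0,1) and δ ∈ (0,α) such that for all N there are n, M > N with (∑_{i=n}^{n+M} q_i)^{α-δ} < ∑_{i=n}^{n+M} q_i^α. -/
/-- For the Lüroth probability vector `q_i = 1/((i+1)(i+2))` (which is eventually decreasing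
with `n·q_n → 0`), the faithfulness inequality fails: there are `α ∈ (0,1)`, `δ ∈ (0,α)` such
that for every `N` there are `n, M > N` with `(∑_{i=n}^{n+M} q_i)^{α-δ} < ∑_{i=n}^{n+M} q_i^α`. -/
theorem lueroth_nonfaithful (q : ℕ → ℝ) (hq : ∀ i, 0 < q i) (hsum : HasSum q 1)
    (hdec : ∃ N : ℕ, ∀ m n : ℕ, N ≤ m → m ≤ n → q n ≤ q m)
    (hlim : Filter.Tendsto (fun n : ℕ => (n : ℝ) * q n) Filter.atTop (nhds 0))
    (hdef : ∀ i : ℕ, q i = 1 / (((i : ℝ) + 1) * ((i : ℝ) + 2))) :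
    ∃ α ∈ Set.Ioo (0 : ℝ) 1, ∃ δ ∈ Set.Ioo (0 : ℝ) α, ∀ N : ℕ, ∃ n M : ℕ,
      N < n ∧ N < M ∧
        (∑ i ∈ Finset.Icc n (n + M), q i) ^ (α - δ) <
          ∑ i ∈ Finset.Icc n (n + M), q i ^ α := by
  refine ⟨1/2, by norm_num, 1/4, by norm_num, fun N => ?_⟩
  set n := max (N + 1) 15 with hn
  have hNn : N < n := lt_of_lt_of_le (Nat.lt_succ_self N) (le_max_left _ _)
  have h15 : 15 ≤ n := le_max_right _ _
  have h15' : (15 : ℝ) ≤ (n : ℝ) := by exact_mod_cast h15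
  refine ⟨n, n, hNn, hNn, ?_⟩
  have hcard : (Finset.Icc n (n + n)).card = n + 1 := by
    simp [Nat.card_Icc]; omega
  set S := ∑ i ∈ Finset.Icc n (n + n), q i with hS
  set T := ∑ i ∈ Finset.Icc n (n + n), q i ^ ((1:ℝ)/2) with hT
  -- S ≤ 1/(n+2) < 1/16
  have hSpos : 0 ≤ S := Finset.sum_nonneg fun i _ => (hq i).le
  have hSle : S ≤ 1 / ((n : ℝ) + 2) := by
    have hbound : ∀ i ∈ Finset.Icc n (n + n),
        q i ≤ 1 / (((n : ℝ) + 1) * ((n : ℝ) + 2)) := by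
      intro i hi
      have hi' : n ≤ i := (Finset.mem_Icc.mp hi).1
      have hi'' : (n : ℝ) ≤ (i : ℝ) := by exact_mod_cast hi'
      rw [hdef i]
      apply one_div_le_one_div_of_le
      · positivity
      · nlinarith
    calc S ≤ (Finset.Icc n (n + n)).card • (1 / (((n : ℝ) + 1) * ((n : ℝ) + 2))) :=
          Finset.sum_le_card_nsmul _ _ _ hbound
      _ = ((n : ℝ) + 1) * (1 / (((n : ℝ) + 1) * ((n : ℝ) + 2))) := by
          rw [hcard, nsmul_eq_mul]; push_cast; ring
      _ = 1 / ((n : ℝ) + 2) := by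
          field_simp
  have hSlt : S < 1 / 16 := lt_of_le_of_lt hSle (by
    rw [div_lt_div_iff₀ (by positivity) (by norm_num)]
    linarith)
  -- T ≥ 1/2
  have hTge : (1:ℝ)/2 ≤ T := by
    have hbound : ∀ i ∈ Finset.Icc n (n + n),
        1 / (2 * (n : ℝ) + 2) ≤ q i ^ ((1:ℝ)/2) := by
      intro i hi
      have hi' : i ≤ n + n := (Finset.mem_Icc.mp hi).2
      have hi'' : (i : ℝ) ≤ (n : ℝ) + (n : ℝ) := by exact_mod_cast hi'
      set c : ℝ := 2 * (n : ℝ) + 2 with hc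
      have hcpos : (0:ℝ) < c := by positivity
      have hqge : 1 / c ^ 2 ≤ q i := by
        rw [hdef i]
        apply one_div_le_one_div_of_le
        · positivity
        · nlinarith
      have key : (1 / c ^ 2) ^ ((1:ℝ)/2) ≤ q i ^ ((1:ℝ)/2) :=
        Real.rpow_le_rpow (by positivity) hqge (by norm_num)
      have heq : ((1:ℝ) / c ^ 2) ^ ((1:ℝ)/2) = 1 / c := by
        rw [Real.div_rpow (by norm_num) (by positivity), Real.one_rpow,
          ← Real.rpow_natCast c 2, ← Real.rpow_mul hcpos.le]
        norm_num
      rw [heq] at key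
      exact key
    calc (1:ℝ)/2 = ((n:ℝ) + 1) * (1 / (2 * (n : ℝ) + 2)) := by
          field_simp
      _ = (Finset.Icc n (n + n)).card • (1 / (2 * (n : ℝ) + 2)) := by
          rw [hcard, nsmul_eq_mul]; push_cast; ring
      _ ≤ T := Finset.card_nsmul_le_sum _ _ _ hbound
  -- Conclude
  have hexp : (1:ℝ)/2 - 1/4 = 1/4 := by norm_num
  rw [hexp]
  have h1 : S ^ ((1:ℝ)/4) < ((1:ℝ)/16) ^ ((1:ℝ)/4) :=
    Real.rpow_lt_rpow hSpos hSlt (by norm_num)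
  have h2 : ((1:ℝ)/16) ^ ((1:ℝ)/4) = 1/2 := by
    rw [show (1:ℝ)/16 = (1/2) ^ (4:ℕ) by norm_num, ← Real.rpow_natCast,
      ← Real.rpow_mul (by norm_num)]
    norm_num
  calc S ^ ((1:ℝ)/4) < 1/2 := h2 ▸ h1
    _ ≤ T := hTge
end

section
/- Let q : ℕ → ℝ with q_i > 0, ∑ q_i = 1, α ∈ (0,1), δ ∈ (0,α). Suppose (k_n), (M_n) are sequences with γ_n := ∑_{i=k_n}^{k_n+M_n} q_i^α > (∑_{i=k_n}^{k_n+M_n} q_i)^{α-δ} for all n, and (ε_n) → 0 with q_i ≤ ε_n for all i ≥ k_n. Let μ be the measure with μ(Δ_{α_1...α_n}) = ∏_{i=1}^n q_{α_i}^α/γ_i for admissible words (k_i ≤ α_i ≤ k_i+M_i). Then for every t ∈ (0,δ) and every admissible word of length n: μ(Δ_{α_1...α_n}) / |Δ_{α_1...α_n}|^t ≤ ε_n^{δ−t}, and hence this ratio tends to 0 as n → ∞. -/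
/-- The mass `μ(Δ_{w 0 … w (n-1)}) = ∏_{i<n} q (w i)^α / γ i` assigned to a cylinder. -/
noncomputable def muVal (q : ℕ → ℝ) (α : ℝ) (γ : ℕ → ℝ) (w : ℕ → ℕ) (n : ℕ) : ℝ :=
  ∏ i ∈ Finset.range n, q (w i) ^ α / γ i

/-- Under `γ_n > (∑_{i=k_n}^{k_n+M_n} q_i)^{α-δ}` and `q_i ≤ ε_n` for `i ≥ k_n` with
`ε_n ↓ 0`, for every `t ∈ (0,δ)` and admissible word one has
`μ(Δ_{w 0 … w (n-1)}) / |Δ_{w 0 … w (n-1)}|^t ≤ ε_{n-1}^{δ-t}`, so the ratio tends to `0`. -/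
theorem muVal_div_len_rpow_le (q : ℕ → ℝ) (hq : ∀ i, 0 < q i) (hsum : HasSum q 1)
    (α δ : ℝ) (hα : α ∈ Set.Ioo (0 : ℝ) 1) (hδ : δ ∈ Set.Ioo (0 : ℝ) α)
    (k M : ℕ → ℕ) (γ ε : ℕ → ℝ)
    (hγdef : ∀ n, γ n = ∑ i ∈ Finset.Icc (k n) (k n + M n), q i ^ α)
    (hγ : ∀ n, (∑ i ∈ Finset.Icc (k n) (k n + M n), q i) ^ (α - δ) < γ n)
    (hε : ∀ n i : ℕ, k n ≤ i → q i ≤ ε n) (hεanti : Antitone ε)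
    (hε0 : Filter.Tendsto ε Filter.atTop (nhds 0))
    (t : ℝ) (ht : 0 < t) (htδ : t < δ)
    (w : ℕ → ℕ) (hadm : ∀ i, k i ≤ w i ∧ w i ≤ k i + M i) :
    (∀ n : ℕ, 1 ≤ n →
        muVal q α γ w n / cylLen q w n ^ t ≤ ε (n - 1) ^ (δ - t)) ∧
      Filter.Tendsto (fun n => muVal q α γ w n / cylLen q w n ^ t)
        Filter.atTop (nhds 0) := by
  obtain ⟨hα0, hα1⟩ := hα
  obtain ⟨hδ0, hδα⟩ := hδ
  have hq1 : ∀ i, q i ≤ 1 := fun i => le_hasSum hsum i (fun j _ => (hq j).le)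
  have hεpos : ∀ n, 0 < ε n := fun n => lt_of_lt_of_le (hq (k n)) (hε n (k n) le_rfl)
  -- bound on each factor
  have hterm : ∀ i, q (w i) ^ α / γ i / q (w i) ^ t ≤ q (w i) ^ (δ - t) := by
    intro i
    have hqpos := hq (w i)
    have hsum_le : q (w i) ≤ ∑ j ∈ Finset.Icc (k i) (k i + M i), q j := by
      refine Finset.single_le_sum (fun j _ => (hq j).le) ?_
      exact Finset.mem_Icc.2 ⟨(hadm i).1, (hadm i).2⟩
    have h1 : q (w i) ^ (α - δ) ≤ (∑ j ∈ Finset.Icc (k i) (k i + M i), q j) ^ (α - δ) :=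
      Real.rpow_le_rpow hqpos.le hsum_le (by linarith)
    have h2 : q (w i) ^ (α - δ) < γ i := lt_of_le_of_lt h1 (hγ i)
    have hpow_pos : (0:ℝ) < q (w i) ^ (α - δ) := Real.rpow_pos_of_pos hqpos _
    have h3 : q (w i) ^ α / γ i ≤ q (w i) ^ α / q (w i) ^ (α - δ) := by
      apply div_le_div_of_nonneg_left (Real.rpow_pos_of_pos hqpos α).le hpow_pos h2.le
    have h4 : q (w i) ^ α / q (w i) ^ (α - δ) = q (w i) ^ δ := by
      rw [← Real.rpow_sub hqpos]; ring_nf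
    have h5 : q (w i) ^ α / γ i / q (w i) ^ t ≤ q (w i) ^ δ / q (w i) ^ t := by
      rw [← h4]
      gcongr <;> first | positivity | exact h2.le
    calc q (w i) ^ α / γ i / q (w i) ^ t ≤ q (w i) ^ δ / q (w i) ^ t := h5
      _ = q (w i) ^ (δ - t) := (Real.rpow_sub hqpos δ t).symm
  have hγpos : ∀ n, 0 < γ n := fun n =>
    lt_trans (Real.rpow_pos_of_pos
      (lt_of_lt_of_le (hq (k n)) (Finset.single_le_sum (fun j _ => (hq j).le)
        (Finset.mem_Icc.2 ⟨le_rfl, Nat.le_add_right _ _⟩))) _) (hγ n)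
  have hlenpos : ∀ n, 0 < cylLen q w n := fun n =>
    Finset.prod_pos fun i _ => hq (w i)
  have hratio : ∀ n, muVal q α γ w n / cylLen q w n ^ t
      = ∏ i ∈ Finset.range n, q (w i) ^ α / γ i / q (w i) ^ t := by
    intro n
    rw [muVal, cylLen, ← Real.finset_prod_rpow _ _ (fun i _ => (hq (w i)).le)]
    simp [Finset.prod_div_distrib]
  have hratio_pos : ∀ n, 0 < muVal q α γ w n / cylLen q w n ^ t := by
    intro n
    rw [hratio n]
    exact Finset.prod_pos fun i _ => div_pos (div_pos (Real.rpow_pos_of_pos (hq (w i)) _)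
      (hγpos i)) (Real.rpow_pos_of_pos (hq (w i)) _)
  have key : ∀ n : ℕ, 1 ≤ n →
      muVal q α γ w n / cylLen q w n ^ t ≤ ε (n - 1) ^ (δ - t) := by
    intro n hn
    obtain ⟨m, rfl⟩ := Nat.exists_eq_add_of_le hn
    have hδt : 0 < δ - t := by linarith
    calc muVal q α γ w (1 + m) / cylLen q w (1 + m) ^ t
        = ∏ i ∈ Finset.range (1 + m), q (w i) ^ α / γ i / q (w i) ^ t := hratio _
      _ ≤ ∏ i ∈ Finset.range (1 + m), q (w i) ^ (δ - t) := by
          refine Finset.prod_le_prod (fun i _ => ?_) (fun i _ => hterm i)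
          exact (div_pos (div_pos (Real.rpow_pos_of_pos (hq (w i)) _) (hγpos i))
            (Real.rpow_pos_of_pos (hq (w i)) _)).le
      _ ≤ ε (1 + m - 1) ^ (δ - t) := by
          rw [Nat.add_comm 1 m, Finset.prod_range_succ, Nat.add_sub_cancel]
          have h1 : ∏ i ∈ Finset.range m, q (w i) ^ (δ - t) ≤ 1 := by
            apply Finset.prod_le_one (fun i _ => (Real.rpow_pos_of_pos (hq (w i)) _).le)
            exact fun i _ => Real.rpow_le_one (hq (w i)).le (hq1 (w i)) hδt.le
          have h2 : q (w m) ^ (δ - t) ≤ ε m ^ (δ - t) :=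
            Real.rpow_le_rpow (hq (w m)).le (hε m (w m) (hadm m).1) hδt.le
          calc (∏ i ∈ Finset.range m, q (w i) ^ (δ - t)) * q (w m) ^ (δ - t)
              ≤ 1 * (ε m ^ (δ - t)) := by
                apply mul_le_mul h1 h2 (Real.rpow_pos_of_pos (hq (w m)) _).le zero_le_one
            _ = ε m ^ (δ - t) := one_mul _
  refine ⟨key, ?_⟩
  have hδt : 0 < δ - t := by linarith
  have hbound : Filter.Tendsto (fun n => ε (n - 1) ^ (δ - t)) Filter.atTop (nhds 0) := by
    have h1 : Filter.Tendsto (fun n : ℕ => ε (n - 1)) Filter.atTop (nhds 0) :=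
      hε0.comp (Filter.tendsto_sub_atTop_nat 1)
    have h2 : Filter.Tendsto (fun x : ℝ => x ^ (δ - t)) (nhds 0) (nhds 0) := by
      have := (Real.continuousAt_rpow_const 0 (δ - t) (Or.inr hδt.le)).tendsto
      simpa [Real.zero_rpow hδt.ne'] using this
    exact h2.comp h1
  refine squeeze_zero' ?_ ?_ hbound
  · exact Filter.Eventually.of_forall fun n => (hratio_pos n).le
  · filter_upwards [Filter.eventually_ge_atTop 1] with n hn using key n hn
end
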